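/- arXiv:1410.4085 — 2 statements merged into one kernel-verified Lean document; each statement's English description precedes it below -/
import Mathlib

section
/- The iterated palindromic closure map ψ : {a,b}^* → {a,b}^* is injective. -/
/-- Stern's diatomic sequence. -/
def stern : ℕ → ℕ
  | 0 => 0
  | 1 => 1
  | n + 2 =>
      if (n + 2) % 2 = 0 then stern ((n + 2) / 2)
      else stern ((n + 2) / 2) + stern ((n + 2) / 2 + 1)
decreasing_by all_goals omega

/-- Shortest palindrome having `w` as a prefix (right palindromic closure). -/
def palClosure (w : List Bool) : List Bool :=
  let d := Nat.find (p := fun d => (w.drop d).reverse = w.drop d)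
    ⟨w.length, by simp⟩
  w ++ (w.take d).reverse

/-- Iterated palindromic closure (palindromization map ψ). -/
def psi (v : List Bool) : List Bool :=
  v.foldl (fun w x => palClosure (w ++ [x])) []

/-- Minimal period of a word (`1` for the empty word). -/
def minPeriod (w : List Bool) : ℕ :=
  Nat.find (p := fun p => 1 ≤ p ∧ ∀ i < w.length, i + p < w.length → w[i]? = w[i + p]?)
    ⟨w.length + 1, by omega, fun i _ h => absurd h (by omega)⟩

/-- The morphism μ_x on a single letter. -/
def muLetter (x y : Bool) : List Bool := if y = x then [x] else [x, y]

/-- Action of μ_x on a word. -/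
def muL (x : Bool) (w : List Bool) : List Bool := w.flatMap (muLetter x)

/-- μ_v = μ_{x₁} ∘ ⋯ ∘ μ_{xₙ} for v = x₁⋯xₙ. -/
def muWord (v : List Bool) (w : List Bool) : List Bool := v.foldr muL w

/-- Fibonacci numbers shifted: `fibD k = F_{k-1}` where F_{-1}=F_0=1. -/
def fibD : ℕ → ℕ
  | 0 => 1
  | 1 => 1
  | n + 2 => fibD (n + 1) + fibD n

/-- Head-recursion helper for continuants. -/
def khead : List ℤ → ℤ
  | [] => 1
  | [a] => a
  | a :: b :: t => a * khead (b :: t) + khead t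

/-- Continuant K[a₀,…,aₙ]: K[]=1, K[a₀]=a₀, K[a₀,…,aₙ]=aₙK[a₀,…,a_{n-1}]+K[a₀,…,a_{n-2}]. -/
def contK (l : List ℤ) : ℤ := khead l.reverse

/-- Value of a little-endian list of binary digits. -/
def ofBits (l : List Bool) : ℕ := l.foldr (fun b n => 2 * n + (if b then 1 else 0)) 0

/-- The integer obtained by reversing the binary expansion of `n`. -/
def binRev (n : ℕ) : ℕ := ofBits n.bits.reverse

/-- The word b(ab)^m over {a,b} ≃ {false,true}. -/
def altPat : ℕ → List Bool
  | 0 => [true]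
  | m + 1 => altPat m ++ [false, true]


lemma psi_concat (v : List Bool) (x : Bool) : psi (v ++ [x]) = palClosure (psi v ++ [x]) := by
  simp [psi, List.foldl_append]

lemma prefix_palClosure (w : List Bool) : w <+: palClosure w := ⟨_, rfl⟩

lemma psi_mono {a b : List Bool} (h : a <+: b) : psi a <+: psi b := by
  induction b using List.reverseRecOn with
  | nil => simp_all
  | append_singleton c x ih =>
    rcases List.prefix_concat_iff.mp h with h' | h'
    · rw [h']
    · refine (ih h').trans ?_
      rw [psi_concat]
      exact (List.prefix_append _ _).trans (prefix_palClosure _)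

lemma psi_concat_prefix (v : List Bool) (x : Bool) : psi v ++ [x] <+: psi (v ++ [x]) := by
  rw [psi_concat]; exact prefix_palClosure _

lemma psi_get (v : List Bool) (n : ℕ) (hn : n < v.length) :
    (psi v)[(psi (v.take n)).length]? = some v[n] := by
  have h1 : psi (v.take n) ++ [v[n]] <+: psi v := by
    refine (psi_concat_prefix _ _).trans (psi_mono ?_)
    have he : v.take n ++ [v[n]] = v.take (n + 1) := by
      rw [List.take_succ, List.getElem?_eq_getElem hn]; rfl
    rw [he]; exact List.take_prefix _ _
  obtain ⟨t, ht⟩ := h1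
  rw [← ht, List.append_assoc, List.getElem?_append_right le_rfl]
  simp

lemma psi_len_lt (a : List Bool) (x : Bool) : (psi a).length < (psi (a ++ [x])).length := by
  have := (psi_concat_prefix a x).length_le
  simpa using this

theorem psi_injective : Function.Injective psi := by
  suffices H : ∀ u v : List Bool, psi u = psi v → u.length ≤ v.length → u = v by
    intro u v h
    rcases le_total u.length v.length with h' | h'
    · exact H u v h h'
    · exact (H v u h.symm h').symm
  intro u v h hle
  have takeeq : ∀ n, n ≤ u.length → u.take n = v.take n := by
    intro n hn
    induction n with
    | zero => simp
    | succ n ih =>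
      have hnu : n < u.length := hn
      have hnv : n < v.length := lt_of_lt_of_le hnu hle
      have ht := ih hnu.le
      have h1 := psi_get u n hnu
      have h2 := psi_get v n hnv
      rw [← ht, ← h, h1] at h2
      have hx : u[n] = v[n] := by injection h2
      rw [List.take_succ, List.take_succ, ht, List.getElem?_eq_getElem hnu,
        List.getElem?_eq_getElem hnv, hx]
  have hlen : u.length = v.length := by
    by_contra hne
    have hlt : u.length < v.length := lt_of_le_of_ne hle hne
    have hu : u = v.take u.length := by
      rw [← takeeq u.length le_rfl, List.take_length]
    have hp : v.take u.length ++ [v[u.length]] <+: v := by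
      have he : v.take u.length ++ [v[u.length]] = v.take (u.length + 1) := by
        rw [List.take_succ, List.getElem?_eq_getElem hlt]; rfl
      rw [he]; exact List.take_prefix _ _
    have := lt_of_lt_of_le (psi_len_lt (v.take u.length) v[u.length]) (psi_mono hp).length_le
    rw [← hu, h] at this
    exact lt_irrefl _ this
  have := takeeq u.length le_rfl
  rwa [List.take_length, hlen, List.take_length] at this
end

section
/- Equivalently in terms of Stern's sequence: for every k ≥ 0 and every n with 2^k + 1 ≤ n ≤ 2^{k+1}, one has k + 2 ≤ s(2n − 1) ≤ F_{k+1}, where (F_k) is the Fibonacci sequence with F_{−1} = F_0 = 1. -/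
lemma stern_two_mul (n : ℕ) : stern (2 * n) = stern n := by
  match n with
  | 0 => rfl
  | n + 1 =>
    show stern (2 * n + 2) = _
    rw [stern]
    have h : (2 * n + 2) % 2 = 0 := by omega
    have h2 : (2 * n + 2) / 2 = n + 1 := by omega
    rw [h, h2]
    simp

lemma stern_two_mul_add_one (n : ℕ) : stern (2 * n + 1) = stern n + stern (n + 1) := by
  match n with
  | 0 => simp [stern]
  | n + 1 =>
    show stern (2 * n + 1 + 2) = _
    rw [stern]
    have h : (2 * n + 1 + 2) % 2 = 1 := by omega
    have h2 : (2 * n + 1 + 2) / 2 = n + 1 := by omega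
    rw [h, h2]
    simp

lemma stern_pos : ∀ n, 1 ≤ n → 1 ≤ stern n := by
  intro n
  induction n using Nat.strong_induction_on with
  | _ n ih =>
    intro hn
    rcases Nat.even_or_odd n with ⟨m, hm⟩ | ⟨m, hm⟩
    · subst hm
      rw [show m + m = 2 * m by ring, stern_two_mul]
      exact ih m (by omega) (by omega)
    · subst hm
      rw [stern_two_mul_add_one]
      match m with
      | 0 => simp [stern]
      | m + 1 =>
        have := ih (m + 1 + 1) (by omega) (by omega)
        omega

lemma fibD_mono (j : ℕ) : fibD j ≤ fibD (j + 1) := by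
  match j with
  | 0 => simp [fibD]
  | j + 1 => rw [show j + 1 + 1 = j + 2 from rfl, fibD]; omega

lemma stern_le_fibD : ∀ j, ∀ t, t ≤ 2 ^ j → stern t ≤ fibD j := by
  intro j
  induction j using Nat.strong_induction_on with
  | _ j ih =>
    intro t ht
    match j with
    | 0 => interval_cases t <;> simp [stern, fibD]
    | 1 => interval_cases t <;> simp [stern, fibD]
    | j + 2 =>
      rcases Nat.even_or_odd t with ⟨u, hu⟩ | ⟨u, hu⟩
      · have hu' : t = 2 * u := by omega
        subst hu'
        rw [stern_two_mul]
        have h1 : u ≤ 2 ^ (j + 1) := by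
          have : 2 ^ (j + 2) = 2 * 2 ^ (j + 1) := by ring
          omega
        calc stern u ≤ fibD (j + 1) := ih (j + 1) (by omega) u h1
          _ ≤ fibD (j + 2) := fibD_mono _
      · subst hu
        rw [stern_two_mul_add_one]
        have hpow : 2 ^ (j + 2) = 2 * 2 ^ (j + 1) := by ring
        have hpow2 : 2 ^ (j + 1) = 2 * 2 ^ j := by ring
        have hu1 : u + 1 ≤ 2 ^ (j + 1) := by omega
        rw [fibD]
        rcases Nat.even_or_odd u with ⟨v, hv⟩ | ⟨v, hv⟩
        · have hv' : u = 2 * v := by omega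
          rw [hv', stern_two_mul]
          have h1 : stern v ≤ fibD j := ih j (by omega) v (by omega)
          have h2 : stern (2 * v + 1) ≤ fibD (j + 1) :=
            ih (j + 1) (by omega) (2 * v + 1) (by omega)
          omega
        · have hv' : u + 1 = 2 * (v + 1) := by omega
          rw [hv', stern_two_mul]
          have h1 : stern (v + 1) ≤ fibD j := ih j (by omega) (v + 1) (by omega)
          have h2 : stern u ≤ fibD (j + 1) := ih (j + 1) (by omega) u (by omega)
          omega

lemma stern_pair_bounds : ∀ k m, 2 ^ k ≤ m → m + 1 ≤ 2 ^ (k + 1) →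
    k + 2 ≤ stern m + stern (m + 1) ∧ stern m + stern (m + 1) ≤ fibD (k + 2) := by
  intro k
  induction k with
  | zero =>
    intro m h1 h2
    have : m = 1 := by omega
    subst this
    simp [stern, fibD]
  | succ k ih =>
    intro m h1 h2
    have hk1 : 1 ≤ 2 ^ k := Nat.one_le_two_pow
    have hpow : 2 ^ (k + 1) = 2 * 2 ^ k := by ring
    have hpow2 : 2 ^ (k + 2) = 2 * 2 ^ (k + 1) := by ring
    have hfib : fibD (k + 1 + 2) = fibD (k + 2) + fibD (k + 1) := rfl
    rcases Nat.even_or_odd m with ⟨t, ht⟩ | ⟨t, ht⟩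
    · have ht' : m = 2 * t := by omega
      subst ht'
      rw [stern_two_mul, stern_two_mul_add_one]
      have hb := ih t (by omega) (by omega)
      have hl : 1 ≤ stern t := stern_pos t (by omega)
      have hu : stern t ≤ fibD (k + 1) := stern_le_fibD (k + 1) t (by omega)
      omega
    · subst ht
      rw [show 2 * t + 1 + 1 = 2 * (t + 1) from rfl, stern_two_mul, stern_two_mul_add_one]
      have hb := ih t (by omega) (by omega)
      have hl : 1 ≤ stern (t + 1) := stern_pos (t + 1) (by omega)
      have hu : stern (t + 1) ≤ fibD (k + 1) := stern_le_fibD (k + 1) (t + 1) (by omega)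
      omega

theorem stern_odd_bounds (k n : ℕ) (h1 : 2 ^ k + 1 ≤ n) (h2 : n ≤ 2 ^ (k + 1)) :
    k + 2 ≤ stern (2 * n - 1) ∧ stern (2 * n - 1) ≤ fibD (k + 2) := by
  obtain ⟨m, rfl⟩ : ∃ m, n = m + 1 := ⟨n - 1, by omega⟩
  have : 2 * (m + 1) - 1 = 2 * m + 1 := by omega
  rw [this, stern_two_mul_add_one]
  exact stern_pair_bounds k m (by omega) (by omega)
end
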